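/- arXiv:1405.4228 — 11 statements merged into one kernel-verified Lean document; each statement's English description precedes it below -/
import Mathlib

section
/- Let D = Dⁿ ∪ Dˣ be a database instance and Q a Boolean monotone query. For any tuple t, every actual cause for Q in (Dⁿ, Dˣ) is also an actual cause for Q in (Dⁿ ∪ {t}, Dˣ); that is, CS(Dⁿ, Dˣ, Q) ⊆ CS(Dⁿ ∪ {t}, Dˣ, Q). -/
variable {α : Type*} [DecidableEq α]

/-- `t` is an actual cause for the boolean query `Q` in the instance with
endogenous tuples `Dn` and exogenous tuples `Dx`: `t` is endogenous and there is a
contingency set `Γ ⊆ Dn` not containing `t` such that the query holds after removing `Γ`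
but fails after additionally removing `t`. -/
def IsCause (Q : Finset α → Prop) (Dn Dx : Finset α) (t : α) : Prop :=
  t ∈ Dn ∧ ∃ Γ ⊆ Dn, t ∉ Γ ∧ Q ((Dn ∪ Dx) \ Γ) ∧ ¬ Q ((Dn ∪ Dx) \ insert t Γ)

/-- for a Boolean monotone query, every actual cause in `(Dn, Dx)`
is also an actual cause in `(Dn ∪ {t}, Dx)`. -/
theorem causes_monotone_in_endogenous
    (Q : Finset α → Prop) (hQmono : ∀ X Y : Finset α, X ⊆ Y → Q X → Q Y)
    (Dn Dx : Finset α) (t : α) (hdisj : Disjoint (insert t Dn) Dx) :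
    {s | IsCause Q Dn Dx s} ⊆ {s | IsCause Q (insert t Dn) Dx s} := by
  intro s hs
  obtain ⟨hsDn, Γ, hΓ, hsΓ, hQ, hnQ⟩ := hs
  by_cases ht : t ∈ Dn
  · show IsCause Q (insert t Dn) Dx s; rw [Finset.insert_eq_self.mpr ht]
    exact (⟨hsDn, Γ, hΓ, hsΓ, hQ, hnQ⟩ : IsCause Q Dn Dx s)
  · have hst : s ≠ t := fun h => ht (h ▸ hsDn)
    have htx : t ∉ Dx := Finset.disjoint_left.mp hdisj (Finset.mem_insert_self t Dn)
    refine ⟨Finset.mem_insert_of_mem hsDn, insert t Γ,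
      Finset.insert_subset_insert t hΓ, by simp [hst, hsΓ], ?_, ?_⟩
    · have : (insert t Dn ∪ Dx) \ insert t Γ = (Dn ∪ Dx) \ Γ := by
        ext x
        simp only [Finset.mem_sdiff, Finset.mem_union, Finset.mem_insert]
        constructor
        · rintro ⟨h1, h2⟩
          push_neg at h2
          rcases h1 with (rfl | h) | h
          · exact absurd rfl h2.1
          · exact ⟨Or.inl h, h2.2⟩
          · exact ⟨Or.inr h, h2.2⟩
        · rintro ⟨h1, h2⟩
          refine ⟨by tauto, ?_⟩
          rintro (rfl | h)
          · rcases h1 with h | h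
            · exact ht h
            · exact htx h
          · exact h2 h
      rw [this]; exact hQ
    · have : (insert t Dn ∪ Dx) \ insert s (insert t Γ) = (Dn ∪ Dx) \ insert s Γ := by
        ext x
        simp only [Finset.mem_sdiff, Finset.mem_union, Finset.mem_insert]
        constructor
        · rintro ⟨h1, h2⟩
          push_neg at h2
          rcases h1 with (rfl | h) | h
          · exact absurd rfl h2.2.1
          · exact ⟨Or.inl h, by tauto⟩
          · exact ⟨Or.inr h, by tauto⟩
        · rintro ⟨h1, h2⟩
          push_neg at h2
          refine ⟨by tauto, ?_⟩
          rintro (rfl | rfl | h)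
          · exact h2.1 rfl
          · rcases h1 with h | h
            · exact ht h
            · exact htx h
          · exact h2.2 h
      rw [this]; exact hnQ
end

section
/- Let D = Dⁿ ∪ Dˣ be a database instance, Q a Boolean monotone query, and t ∈ Dⁿ. Then t is an actual cause for Q in (Dⁿ, Dˣ) if and only if DF(D, Dⁿ, κ(Q), t) ≠ ∅, i.e., if and only if there exists an S-repair D' of D with respect to κ(Q) such that t ∈ D ∖ D' and D ∖ D' ⊆ Dⁿ. -/
variable {α : Type*} [DecidableEq α]

/-- `D'` is an S-repair of `D` wrt the denial constraint `κ(Q)`: an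
inclusion-maximal subset of `D` on which `Q` fails. -/
def SRepair (Q : Finset α → Prop) (D D' : Finset α) : Prop :=
  D' ⊆ D ∧ ¬ Q D' ∧ ∀ D'' : Finset α, D' ⊂ D'' → D'' ⊆ D → Q D''

/-- `DF(D, Dn, κ(Q), t)`: differences `D ∖ D'` for S-repairs `D'` of `D` wrt `κ(Q)`
such that `t ∈ D ∖ D' ⊆ Dn`. -/
def DF (Q : Finset α → Prop) (Dn Dx : Finset α) (t : α) : Set (Finset α) :=
  {s | ∃ D' : Finset α, SRepair Q (Dn ∪ Dx) D' ∧ t ∈ (Dn ∪ Dx) \ D' ∧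
        (Dn ∪ Dx) \ D' ⊆ Dn ∧ s = (Dn ∪ Dx) \ D'}

/-- `t ∈ Dn` is an actual cause for `Q` iff `DF(D, Dn, κ(Q), t) ≠ ∅`. -/
theorem cause_iff_DF_nonempty
    (Q : Finset α → Prop) (hQmono : ∀ X Y : Finset α, X ⊆ Y → Q X → Q Y)
    (Dn Dx : Finset α) (hdisj : Disjoint Dn Dx) (t : α) (ht : t ∈ Dn) :
    IsCause Q Dn Dx t ↔ DF Q Dn Dx t ≠ ∅ := by
  classical
  set D := Dn ∪ Dx with hD
  have htD : t ∈ D := Finset.mem_union_left _ ht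
  rw [← Set.nonempty_iff_ne_empty]
  constructor
  · rintro ⟨-, Γ, hΓn, htΓ, hQ1, hQ2⟩
    set S := D \ insert t Γ with hS
    have hfin : {X : Finset α | S ⊆ X ∧ X ⊆ D ∧ ¬ Q X}.Finite := by
      apply Set.Finite.subset D.powerset.finite_toSet
      intro X hX
      simpa using hX.2.1
    obtain ⟨D', ⟨hSD', hD'D, hnQ⟩, hmax⟩ :=
      hfin.exists_maximalFor id _ ⟨S, subset_rfl, Finset.sdiff_subset, hQ2⟩
    have hDΓ : D \ Γ = insert t S := by
      ext x
      simp only [hS, Finset.mem_sdiff, Finset.mem_insert]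
      constructor
      · rintro ⟨hxD, hxΓ⟩
        by_cases hx : x = t
        · exact Or.inl hx
        · exact Or.inr ⟨hxD, by simp [hx, hxΓ]⟩
      · rintro (rfl | ⟨hxD, hx⟩)
        · exact ⟨htD, htΓ⟩
        · exact ⟨hxD, fun h => hx (by simpa using Or.inr h)⟩
    have htD' : t ∉ D' := by
      intro htin
      apply hnQ
      apply hQmono (D \ Γ) D'
      · rw [hDΓ]
        exact Finset.insert_subset htin hSD'
      · exact hQ1
    have hDxS : Dx ⊆ S := by
      intro x hx
      rw [hS, Finset.mem_sdiff]
      refine ⟨Finset.mem_union_right _ hx, ?_⟩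
      intro hmem
      rcases Finset.mem_insert.mp hmem with rfl | hΓ
      · exact (Finset.disjoint_left.mp hdisj ht) hx
      · exact (Finset.disjoint_left.mp hdisj (hΓn hΓ)) hx
    refine ⟨D \ D', D', ⟨hD'D, hnQ, ?_⟩, ?_, ?_, rfl⟩
    · intro D'' hlt hsub
      by_contra hnQ''
      have := hmax (j := D'') ⟨hSD'.trans hlt.1, hsub, hnQ''⟩ hlt.1
      exact hlt.2 this
    · exact Finset.mem_sdiff.mpr ⟨htD, htD'⟩
    · intro x hx
      rw [Finset.mem_sdiff] at hx
      rcases Finset.mem_union.mp hx.1 with h | h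
      · exact h
      · exact absurd (hSD' (hDxS h)) hx.2
  · rintro ⟨s, D', ⟨hsub, hnQ, hmaxQ⟩, ht', hsubn, rfl⟩
    rw [Finset.mem_sdiff] at ht'
    refine ⟨ht, (D \ D').erase t, ?_, Finset.notMem_erase _ _, ?_, ?_⟩
    · exact (Finset.erase_subset _ _).trans hsubn
    · apply hQmono (insert t D')
      · intro x hx
        rcases Finset.mem_insert.mp hx with rfl | hx
        · exact Finset.mem_sdiff.mpr ⟨htD, Finset.notMem_erase _ _⟩
        · exact Finset.mem_sdiff.mpr ⟨hsub hx,
            fun h => ((Finset.erase_subset _ _) h |> Finset.mem_sdiff.mp).2 hx⟩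
      · exact hmaxQ _ (Finset.ssubset_insert ht'.2) (Finset.insert_subset ht'.1 hsub)
    · have : insert t ((D \ D').erase t) = D \ D' := Finset.insert_erase (Finset.mem_sdiff.mpr ht')
      show ¬ Q (D \ insert t ((D \ D').erase t))
      rw [this, Finset.sdiff_sdiff_self_left, Finset.inter_eq_right.mpr hsub]
      exact hnQ
end

section
/- Let D = Dⁿ ∪ Dˣ be a database instance, Q a Boolean monotone query, and t ∈ Dⁿ. If DF(D, Dⁿ, κ(Q), t) = ∅, then the responsibility of t is zero: ρ(t) = 0. -/
variable {α : Type*} [DecidableEq α]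

open Classical in
/-- The responsibility `ρ(t)`: `1/(|Γ|+1)` for a minimum-cardinality contingency set `Γ`
witnessing that `t` is an actual cause, and `0` if `t` is not an actual cause. -/
noncomputable def rho (Q : Finset α → Prop) (Dn Dx : Finset α) (t : α) : ℝ :=
  if IsCause Q Dn Dx t then
    1 / (((sInf {n : ℕ | ∃ Γ ⊆ Dn, t ∉ Γ ∧ Γ.card = n ∧
        Q ((Dn ∪ Dx) \ Γ) ∧ ¬ Q ((Dn ∪ Dx) \ insert t Γ)} : ℕ) : ℝ) + 1)
  else 0

/-- if `DF(D, Dn, κ(Q), t) = ∅` then `ρ(t) = 0`. -/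
theorem rho_eq_zero_of_DF_empty
    (Q : Finset α → Prop) (hQmono : ∀ X Y : Finset α, X ⊆ Y → Q X → Q Y)
    (Dn Dx : Finset α) (hdisj : Disjoint Dn Dx) (t : α) (ht : t ∈ Dn)
    (hDF : DF Q Dn Dx t = ∅) :
    rho Q Dn Dx t = 0 := by
  classical
  rw [rho, if_neg]
  intro ⟨htDn, Γ, hΓDn, htΓ, hQ1, hQ2⟩
  set D := Dn ∪ Dx with hD
  set base := D \ insert t Γ with hbase
  have htD : t ∈ D := Finset.mem_union_left _ ht
  -- candidates: subsets of D containing base on which Q fails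
  have hne : (D.powerset.filter (fun S => base ⊆ S ∧ ¬ Q S)).Nonempty := by
    refine ⟨base, ?_⟩
    simp only [Finset.mem_filter, Finset.mem_powerset]
    exact ⟨Finset.sdiff_subset, Finset.Subset.refl _, hQ2⟩
  obtain ⟨D', hD'mem, hmax⟩ := Finset.exists_max_image _ Finset.card hne
  simp only [Finset.mem_filter, Finset.mem_powerset] at hD'mem
  obtain ⟨hD'sub, hbasesub, hnQ⟩ := hD'mem
  have htD' : t ∉ D' := by
    intro htD'
    apply hnQ
    apply hQmono (D \ Γ) D' _ hQ1
    intro x hx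
    rcases Finset.mem_sdiff.mp hx with ⟨hxD, hxΓ⟩
    by_cases hxt : x = t
    · exact hxt ▸ htD'
    · exact hbasesub (Finset.mem_sdiff.mpr ⟨hxD, by simp [hxt, hxΓ]⟩)
  have : (D \ D') ∈ DF Q Dn Dx t := by
    refine ⟨D', ⟨hD'sub, hnQ, ?_⟩, Finset.mem_sdiff.mpr ⟨htD, htD'⟩, ?_, rfl⟩
    · intro D'' hss hsub
      by_contra hnQ''
      have := hmax D'' (Finset.mem_filter.mpr ⟨Finset.mem_powerset.mpr hsub, hnQ'' |> fun h =>
        ⟨hbasesub.trans hss.subset, h⟩⟩)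
      exact absurd (Finset.card_lt_card hss) (not_lt.mpr this)
    · intro x hx
      rcases Finset.mem_sdiff.mp hx with ⟨hxD, hxD'⟩
      have hxbase : x ∉ base := fun h => hxD' (hbasesub h)
      have : x ∈ insert t Γ := by
        by_contra h
        exact hxbase (Finset.mem_sdiff.mpr ⟨hxD, h⟩)
      rcases Finset.mem_insert.mp this with h | h
      · exact h ▸ htDn
      · exact hΓDn h
  rw [hDF] at this
  exact this
end

section
/- Let D = Dⁿ ∪ Dˣ be a database instance, Q a Boolean monotone query, and t ∈ Dⁿ with ρ(t) ≠ 0. Then ρ(t) = 1/|s|, where s is any element of DF(D, Dⁿ, κ(Q), t) of minimum cardinality (i.e., s ∈ DF(D, Dⁿ, κ(Q), t) and there is no s' ∈ DF(D, Dⁿ, κ(Q), t) with |s'| < |s|). -/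
variable {α : Type*} [DecidableEq α]

/-- if `ρ(t) ≠ 0` then `ρ(t) = 1/|s|` for any minimum-cardinality
element `s` of `DF(D, Dn, κ(Q), t)`. -/
theorem rho_eq_inv_card_min_DF
    (Q : Finset α → Prop) (hQmono : ∀ X Y : Finset α, X ⊆ Y → Q X → Q Y)
    (Dn Dx : Finset α) (hdisj : Disjoint Dn Dx) (t : α) (ht : t ∈ Dn)
    (hρ : rho Q Dn Dx t ≠ 0) (s : Finset α) (hs : s ∈ DF Q Dn Dx t)
    (hmin : ¬ ∃ s' ∈ DF Q Dn Dx t, s'.card < s.card) :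
    rho Q Dn Dx t = 1 / (s.card : ℝ) := by
  classical
  -- ρ ≠ 0 forces IsCause
  have hcause : IsCause Q Dn Dx t := by
    by_contra h
    simp [rho, h] at hρ
  set D := Dn ∪ Dx with hD
  set S : Set ℕ := {n : ℕ | ∃ Γ ⊆ Dn, t ∉ Γ ∧ Γ.card = n ∧
      Q (D \ Γ) ∧ ¬ Q (D \ insert t Γ)} with hS
  have htD : t ∈ D := Finset.mem_union_left _ ht
  -- unpack s
  obtain ⟨D', ⟨hD'sub, hQD', hmax⟩, hts, hsDn, hseq⟩ := hs
  have hts' : t ∈ s := hseq ▸ hts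
  have hsD : s ⊆ D := hseq ▸ Finset.sdiff_subset
  have htD' : t ∉ D' := by
    rw [hseq, Finset.mem_sdiff] at hts'; exact hts'.2
  -- Γ₀ := s.erase t is a contingency set
  have hcont : (s.erase t).card ∈ S := by
    refine ⟨s.erase t, ?_, Finset.notMem_erase _ _, rfl, ?_, ?_⟩
    · exact (Finset.erase_subset _ _).trans (hseq ▸ hsDn)
    · -- Q (D \ s.erase t) : D \ s.erase t = insert t D'
      have heq : D \ s.erase t = insert t D' := by
        ext x
        constructor
        · intro hx
          obtain ⟨hxD, hxe⟩ := Finset.mem_sdiff.mp hx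
          by_cases hxt : x = t
          · exact Finset.mem_insert.mpr (Or.inl hxt)
          · refine Finset.mem_insert.mpr (Or.inr ?_)
            by_contra hxD'
            refine hxe (Finset.mem_erase.mpr ⟨hxt, ?_⟩)
            rw [hseq]
            exact Finset.mem_sdiff.mpr ⟨hxD, hxD'⟩
        · intro hx
          rcases Finset.mem_insert.mp hx with rfl | hxD'
          · exact Finset.mem_sdiff.mpr ⟨htD, Finset.notMem_erase _ _⟩
          · refine Finset.mem_sdiff.mpr ⟨hD'sub hxD', fun hc => ?_⟩
            have hxs := Finset.mem_of_mem_erase hc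
            rw [hseq, Finset.mem_sdiff] at hxs
            exact hxs.2 hxD'
      rw [heq]
      exact hmax _ (Finset.ssubset_insert htD') (Finset.insert_subset htD hD'sub)
    · have : insert t (s.erase t) = s := Finset.insert_erase hts'
      rw [this, hseq]
      have : D \ ((Dn ∪ Dx) \ D') = D' := by
        rw [Finset.sdiff_sdiff_self_left]
        exact Finset.inter_eq_right.mpr hD'sub
      rw [this]
      exact hQD'
  have hSne : S.Nonempty := ⟨_, hcont⟩
  -- the infimum is attained
  obtain ⟨Γ, hΓDn, htΓ, hΓcard, hQ1, hQ2⟩ := Nat.sInf_mem hSne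
  -- build an S-repair extending D \ insert t Γ
  set base : Finset α := D \ insert t Γ with hbase
  have hbaseD : base ⊆ D := Finset.sdiff_subset
  set T : Finset (Finset α) := D.powerset.filter (fun X => base ⊆ X ∧ ¬ Q X) with hT
  have hbaseT : base ∈ T := by
    simp only [hT, Finset.mem_filter, Finset.mem_powerset]
    exact ⟨hbaseD, Finset.Subset.refl _, hQ2⟩
  obtain ⟨E, hET, hEmax⟩ := T.exists_max_image Finset.card ⟨base, hbaseT⟩
  simp only [hT, Finset.mem_filter, Finset.mem_powerset] at hET
  obtain ⟨hED, hbaseE, hQE⟩ := hET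
  have hrepair : SRepair Q D E := by
    refine ⟨hED, hQE, fun D'' hsub hsubD => ?_⟩
    by_contra hQ''
    have : D'' ∈ T := by
      simp only [hT, Finset.mem_filter, Finset.mem_powerset]
      exact ⟨hsubD, hbaseE.trans hsub.subset, hQ''⟩
    exact absurd (hEmax _ this) (not_le.mpr (Finset.card_lt_card hsub))
  have htE : t ∉ E := by
    intro htE
    have : D \ Γ ⊆ E := by
      intro x hx
      rw [Finset.mem_sdiff] at hx
      by_cases hxt : x = t
      · exact hxt ▸ htE
      · exact hbaseE (Finset.mem_sdiff.mpr ⟨hx.1, by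
          simp only [Finset.mem_insert, not_or]; exact ⟨hxt, hx.2⟩⟩)
    exact hQE (hQmono _ _ this hQ1)
  have hDE : D \ E ⊆ insert t Γ := by
    intro x hx
    rw [Finset.mem_sdiff] at hx
    by_contra hxi
    exact hx.2 (hbaseE (Finset.mem_sdiff.mpr ⟨hx.1, hxi⟩))
  have hDF : (D \ E) ∈ DF Q Dn Dx t := by
    refine ⟨E, hrepair, Finset.mem_sdiff.mpr ⟨htD, htE⟩, ?_, rfl⟩
    intro x hx
    rcases Finset.mem_insert.mp (hDE hx) with rfl | hxΓ
    · exact ht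
    · exact hΓDn hxΓ
  -- cardinality comparison
  have hcard_le : s.card ≤ (D \ E).card := by
    by_contra h
    exact hmin ⟨D \ E, hDF, not_le.mp h⟩
  have h1 : (D \ E).card ≤ sInf S + 1 := by
    calc (D \ E).card ≤ (insert t Γ).card := Finset.card_le_card hDE
    _ ≤ Γ.card + 1 := Finset.card_insert_le _ _
    _ = sInf S + 1 := by rw [hΓcard]
  have h2 : sInf S + 1 ≤ s.card := by
    have := Nat.sInf_le hcont
    have hc : (s.erase t).card = s.card - 1 := Finset.card_erase_of_mem hts'
    have hpos : 1 ≤ s.card := Finset.card_pos.mpr ⟨t, hts'⟩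
    omega
  have hkey : sInf S + 1 = s.card := by omega
  rw [rho, if_pos hcause]
  have hfold : (sInf {n : ℕ | ∃ Γ ⊆ Dn, t ∉ Γ ∧ Γ.card = n ∧
      Q ((Dn ∪ Dx) \ Γ) ∧ ¬ Q ((Dn ∪ Dx) \ insert t Γ)} : ℕ) = sInf S := rfl
  rw [hfold]
  have : ((sInf S : ℕ) : ℝ) + 1 = (s.card : ℝ) := by exact_mod_cast hkey
  rw [this]
end

section
/- Let D be a database instance all of whose tuples are endogenous, and let κ be a denial constraint with violation view V^κ given by a Boolean monotone query Q with Q(∅) false. Then D is consistent with respect to κ (i.e., Q(D) fails) if and only if CS(D, ∅, V^κ) = ∅, i.e., if and only if there are no actual causes for V^κ in D. -/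
variable {α : Type*} [DecidableEq α]

/-- `D` (all tuples endogenous) is consistent wrt the denial constraint
`κ` with violation view `Q` (a monotone query with `Q ∅` false) iff there are
no actual causes for the violation view, i.e. `CS(D, ∅, V^κ) = ∅`. -/
theorem consistent_iff_no_causes
    (Q : Finset α → Prop) (hQmono : ∀ X Y : Finset α, X ⊆ Y → Q X → Q Y)
    (hQempty : ¬ Q ∅) (D : Finset α) :
    ¬ Q D ↔ {t | IsCause Q D ∅ t} = ∅ := by
  constructor
  · intro hD
    ext t
    simp only [Set.mem_setOf_eq, Set.mem_empty_iff_false, iff_false]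
    rintro ⟨htD, Γ, hΓD, htΓ, hQ1, hQ2⟩
    exact hD (hQmono _ _ (Finset.sdiff_subset.trans (by simp)) hQ1)
  · intro h
    intro hQD
    -- find a minimal subset S of D with Q S
    classical
    have hS : ∃ S ∈ {S : Finset α | S ⊆ D ∧ Q S}, ∀ T ∈ {S : Finset α | S ⊆ D ∧ Q S}, id T ≤ id S → id S = id T := by
      obtain ⟨S, hS, hSmin⟩ := Set.Finite.exists_minimalFor id {S : Finset α | S ⊆ D ∧ Q S}
        (Set.Finite.subset (Set.finite_Iic D) (fun S hS => hS.1)) ⟨D, subset_rfl, hQD⟩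
      exact ⟨S, hS, fun T hT hle => le_antisymm (hSmin hT hle) hle⟩
    obtain ⟨S, ⟨hSD, hQS⟩, hmin⟩ := hS
    have hSne : S.Nonempty := by
      rcases S.eq_empty_or_nonempty with rfl | h
      · exact absurd hQS hQempty
      · exact h
    obtain ⟨t, htS⟩ := hSne
    have : IsCause Q D ∅ t := by
      refine ⟨hSD htS, D \ S, Finset.sdiff_subset, by simp [htS], ?_, ?_⟩
      · have : (D ∪ ∅) \ (D \ S) = S := by
          ext x
          simp only [Finset.union_empty, Finset.mem_sdiff, Finset.mem_union]
          constructor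
          · rintro ⟨hx, hx2⟩
            by_contra hxs
            exact hx2 ⟨hx, hxs⟩
          · intro hx
            exact ⟨hSD hx, fun h => h.2 hx⟩
        rw [this]; exact hQS
      · have heq : (D ∪ ∅) \ insert t (D \ S) = S.erase t := by
          ext x
          simp only [Finset.union_empty, Finset.mem_sdiff, Finset.mem_insert,
            Finset.mem_erase, not_or, Finset.mem_sdiff, not_and, not_not]
          constructor
          · rintro ⟨hx, hxt, hx2⟩
            exact ⟨hxt, hx2 hx⟩
          · rintro ⟨hxt, hxS⟩
            exact ⟨hSD hxS, hxt, fun _ => hxS⟩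
        rw [heq]
        intro hQe
        have := hmin (S.erase t) ⟨(Finset.erase_subset _ _).trans hSD, hQe⟩ (Finset.erase_subset _ _)
        simp only [id] at this
        exact absurd (this ▸ htS) (Finset.notMem_erase t S)
    exact (Set.eq_empty_iff_forall_notMem.mp h t) this
end

section
/- Let D be a database instance all of whose tuples are endogenous, and let κ be a denial constraint with violation view V^κ given by a Boolean monotone query Q. Assume D is inconsistent with respect to κ, i.e., Q(D) holds. Then a proper subset D' ⊊ D is an S-repair of D with respect to κ if and only if for every t ∈ D ∖ D': t is an actual cause for V^κ (t ∈ CS(D, ∅, V^κ)) and D ∖ (D' ∪ {t}) ∈ CT(D, D, V^κ, t). -/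
variable {α : Type*} [DecidableEq α]

/-- `CT(D, Dn, V^κ, t)`: the family of S-minimal contingency sets for `t`. -/
def CT (Q : Finset α → Prop) (D Dn : Finset α) (t : α) : Set (Finset α) :=
  {s | s ⊆ Dn ∧ Q (D \ s) ∧ ¬ Q (D \ insert t s) ∧
        ∀ s'' : Finset α, s'' ⊂ s → Q (D \ insert t s'')}

lemma aux_A {D D' : Finset α} {t : α} (htD : t ∈ D) (hsub : D' ⊆ D) :
    D \ (D \ insert t D') = insert t D' := by
  ext x; simp only [Finset.mem_sdiff, Finset.mem_insert]
  constructor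
  · tauto
  · rintro (rfl | hx) <;> [exact ⟨htD, fun h => h.2 (Or.inl rfl)⟩;
      exact ⟨hsub hx, fun h => h.2 (Or.inr hx)⟩]

lemma aux_B {D D' : Finset α} {t : α} (htD' : t ∉ D') (hsub : D' ⊆ D) :
    D \ insert t (D \ insert t D') = D' := by
  ext x; simp only [Finset.mem_sdiff, Finset.mem_insert]
  constructor
  · rintro ⟨hxD, hx⟩
    push_neg at hx
    obtain ⟨hxt, hx2⟩ := hx
    rcases (hx2 hxD).resolve_left hxt with h
    exact h
  · intro hx
    refine ⟨hsub hx, ?_⟩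
    rintro (rfl | ⟨_, h⟩)
    · exact htD' hx
    · exact h (Or.inr hx)

/-- for `D` inconsistent wrt `κ` (all tuples endogenous), a proper subset
`D' ⊊ D` is an S-repair of `D` iff every `t ∈ D ∖ D'` is an actual cause for the
violation view and `D ∖ (D' ∪ {t}) ∈ CT(D, D, V^κ, t)`. -/
theorem srepair_iff_causes_and_CT
    (Q : Finset α → Prop) (hQmono : ∀ X Y : Finset α, X ⊆ Y → Q X → Q Y)
    (D : Finset α) (hQD : Q D) (D' : Finset α) (hD' : D' ⊂ D) :
    SRepair Q D D' ↔
      ∀ t ∈ D \ D', IsCause Q D ∅ t ∧ D \ insert t D' ∈ CT Q D D t := by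
  constructor
  · rintro ⟨hsub, hnQ, hmax⟩ t ht
    rw [Finset.mem_sdiff] at ht
    obtain ⟨htD, htD'⟩ := ht
    have hA := aux_A htD hsub
    have hB := aux_B htD' hsub
    have hQins : Q (insert t D') :=
      hmax _ (Finset.ssubset_insert htD') (Finset.insert_subset htD hsub)
    refine ⟨⟨htD, D \ insert t D', Finset.sdiff_subset, ?_, ?_, ?_⟩, ?_, ?_, ?_, ?_⟩
    · simp
    · rw [Finset.union_empty, hA]; exact hQins
    · rw [Finset.union_empty, hB]; exact hnQ
    · exact Finset.sdiff_subset
    · rw [hA]; exact hQins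
    · rw [hB]; exact hnQ
    · intro s'' hs''
      apply hmax
      · constructor
        · intro x hx
          rw [Finset.mem_sdiff, Finset.mem_insert]
          refine ⟨hsub hx, ?_⟩
          rintro (rfl | hxs)
          · exact htD' hx
          · exact (Finset.mem_sdiff.mp (hs''.subset hxs)).2 (Finset.mem_insert_of_mem hx)
        · intro hcon
          obtain ⟨y, hys, hyns⟩ := Finset.exists_of_ssubset hs''
          rw [Finset.mem_sdiff, Finset.mem_insert] at hys
          push_neg at hys
          have := hcon (Finset.mem_sdiff.mpr ⟨hys.1, by
            rw [Finset.mem_insert]; push_neg; exact ⟨hys.2.1, hyns⟩⟩)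
          exact hys.2.2 this
      · exact Finset.sdiff_subset
  · intro h
    obtain ⟨t0, ht0⟩ := Finset.exists_of_ssubset hD'
    have ht0' : t0 ∈ D \ D' := Finset.mem_sdiff.mpr ht0
    obtain ⟨_, _, _, hnQ0, _⟩ := h t0 ht0'
    rw [aux_B ht0.2 hD'.subset] at hnQ0
    refine ⟨hD'.subset, hnQ0, ?_⟩
    intro D'' hss hsub''
    obtain ⟨t, htD'', htD'⟩ := Finset.exists_of_ssubset hss
    have htmem : t ∈ D \ D' := Finset.mem_sdiff.mpr ⟨hsub'' htD'', htD'⟩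
    obtain ⟨_, _, hQs, _, _⟩ := h t htmem
    rw [aux_A (hsub'' htD'') hD'.subset] at hQs
    exact hQmono _ _ (Finset.insert_subset htD'' (hss.subset.trans (le_refl _))) hQs
end

section
/- Let D be a database instance all of whose tuples are endogenous, and let κ be a denial constraint with violation view V^κ given by a Boolean monotone query Q with Q(∅) false. Then a ground atomic query A is consistently true under the S-repair semantics (i.e., A belongs to every S-repair of D with respect to κ) if and only if A ∈ D ∖ CS(D, ∅, V^κ). -/
variable {α : Type*} [DecidableEq α]

open Classical in
lemma exists_repair_extending (Q : Finset α → Prop) (D S : Finset α)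
    (hS : S ⊆ D) (hQS : ¬ Q S) : ∃ D', SRepair Q D D' ∧ S ⊆ D' := by
  classical
  set s : Finset (Finset α) := D.powerset.filter (fun T => S ⊆ T ∧ ¬ Q T) with hs
  have hne : s.Nonempty := ⟨S, by simp [hs, hS, hQS]⟩
  obtain ⟨T, hT, hmax⟩ := s.exists_max_image Finset.card hne
  simp only [hs, Finset.mem_filter, Finset.mem_powerset] at hT
  refine ⟨T, ⟨hT.1, hT.2.2, ?_⟩, hT.2.1⟩
  intro D'' hsub hsubD
  by_contra hQ
  have hmem : D'' ∈ s := by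
    simp only [hs, Finset.mem_filter, Finset.mem_powerset]
    exact ⟨hsubD, hT.2.1.trans hsub.subset, hQ⟩
  have := hmax D'' hmem
  exact absurd (Finset.card_lt_card hsub) (not_lt.mpr this)

/-- a ground atomic query `A` is consistently true under the S-repair
semantics (belongs to every S-repair of `D` wrt `κ`) iff `A ∈ D ∖ CS(D, ∅, V^κ)`. -/
theorem cqa_iff_not_cause
    (Q : Finset α → Prop) (hQmono : ∀ X Y : Finset α, X ⊆ Y → Q X → Q Y)
    (hQempty : ¬ Q ∅) (D : Finset α) (A : α) :
    (∀ D' : Finset α, SRepair Q D D' → A ∈ D') ↔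
      A ∈ (D : Set α) \ {t | IsCause Q D ∅ t} := by
  classical
  constructor
  · intro h
    obtain ⟨R, hR, -⟩ := exists_repair_extending Q D ∅ (Finset.empty_subset D) hQempty
    have hAD : A ∈ D := hR.1 (h R hR)
    refine ⟨hAD, ?_⟩
    rintro ⟨-, Γ, hΓD, hAΓ, hQ1, hQ2⟩
    simp only [Finset.union_empty] at hQ1 hQ2
    obtain ⟨R, hR, hsub⟩ := exists_repair_extending Q D (D \ insert A Γ)
      (Finset.sdiff_subset) hQ2
    have hAR : A ∉ R := by
      intro hAR
      apply hR.2.1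
      apply hQmono (D \ Γ) R
      intro x hx
      rw [Finset.mem_sdiff] at hx
      by_cases hxA : x = A
      · subst hxA; exact hAR
      · exact hsub (Finset.mem_sdiff.mpr ⟨hx.1, by simp [hxA, hx.2]⟩)
      · exact hQ1
    exact hAR (h R hR)
  · rintro ⟨hAD, hnc⟩ D' hD'
    by_contra hAD'
    apply hnc
    refine ⟨hAD, D \ insert A D', Finset.sdiff_subset, by simp, ?_, ?_⟩
    · simp only [Finset.union_empty]
      have heq : D \ (D \ insert A D') = insert A D' := by
        ext x
        simp only [Finset.mem_sdiff, Finset.mem_insert, not_and, not_not]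
        constructor
        · rintro ⟨hxD, h2⟩
          exact h2 hxD
        · rintro (rfl | hx)
          · exact ⟨hAD, fun _ => Or.inl rfl⟩
          · exact ⟨hD'.1 hx, fun _ => Or.inr hx⟩
      rw [heq]
      exact hD'.2.2 _ (Finset.ssubset_insert hAD') (Finset.insert_subset hAD hD'.1)
    · simp only [Finset.union_empty]
      have heq : D \ insert A (D \ insert A D') = D' := by
        ext x
        have := @hD'.1 x
        have : x = A → x ∉ D' := fun h => h ▸ hAD'
        simp only [Finset.mem_sdiff, Finset.mem_insert, not_or, not_and, not_not]
        tauto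
      rw [heq]
      exact hD'.2.1
end

section
/- Let D = Dⁿ ∪ Dˣ be a database instance, Q a Boolean monotone query, and M the associated diagnosis problem. A tuple t ∈ Dⁿ is an actual cause for Q in (Dⁿ, Dˣ) if and only if D(M, t) ≠ ∅, i.e., if and only if there exists a subset-minimal diagnosis of M that contains t. -/
variable {α : Type*} [DecidableEq α]

/-- A diagnosis for the consistency-based diagnosis problem `M` associated with the
query `Q` on the instance `D = Dn ∪ Dx`: a set `Δ` of endogenous tuples whose
removal invalidates the (observed) query. -/
def IsDiag (Q : Finset α → Prop) (Dn Dx Δ : Finset α) : Prop :=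
  Δ ⊆ Dn ∧ Q (Dn ∪ Dx) ∧ ¬ Q ((Dn ∪ Dx) \ Δ)

/-- A subset-minimal diagnosis. -/
def MinDiag (Q : Finset α → Prop) (Dn Dx Δ : Finset α) : Prop :=
  IsDiag Q Dn Dx Δ ∧ ∀ Δ' : Finset α, Δ' ⊂ Δ → ¬ IsDiag Q Dn Dx Δ'

/-- `t ∈ Dn` is an actual cause for `Q` iff `D(M, t) ≠ ∅`, i.e. iff
some subset-minimal diagnosis contains `t`. -/
theorem cause_iff_min_diagnosis
    (Q : Finset α → Prop) (hQmono : ∀ X Y : Finset α, X ⊆ Y → Q X → Q Y)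
    (Dn Dx : Finset α) (hdisj : Disjoint Dn Dx) (t : α) (ht : t ∈ Dn) :
    IsCause Q Dn Dx t ↔ ∃ Δ : Finset α, MinDiag Q Dn Dx Δ ∧ t ∈ Δ := by
  constructor
  · rintro ⟨-, Γ, hΓsub, htΓ, hq, hnq⟩
    have hQD : Q (Dn ∪ Dx) := hQmono _ _ Finset.sdiff_subset hq
    suffices h : ∀ n (Δ : Finset α), Δ.card ≤ n → Δ ⊆ Dn → t ∈ Δ →
        Q ((Dn ∪ Dx) \ (Δ \ {t})) → ¬ Q ((Dn ∪ Dx) \ Δ) →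
        ∃ Δ', MinDiag Q Dn Dx Δ' ∧ t ∈ Δ' by
      refine h (insert t Γ).card (insert t Γ) le_rfl
        (Finset.insert_subset ht hΓsub) (Finset.mem_insert_self _ _) ?_ hnq
      rwa [Finset.insert_sdiff_of_mem _ (Finset.mem_singleton_self t),
        Finset.sdiff_eq_self_of_disjoint (Finset.disjoint_singleton_right.mpr htΓ)]
    intro n
    induction n with
    | zero =>
      intro Δ hcard _ htΔ _ _
      interval_cases h : Δ.card
      · rw [Finset.card_eq_zero] at h; subst h; simp at htΔ
    | succ n ih =>
      intro Δ hcard hsub htΔ hqmin hnq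
      by_cases hmin : ∀ Δ' ⊂ Δ, ¬ IsDiag Q Dn Dx Δ'
      · exact ⟨Δ, ⟨⟨hsub, hQD, hnq⟩, hmin⟩, htΔ⟩
      · push_neg at hmin
        obtain ⟨Δ', hss, hdiag⟩ := hmin
        have htΔ' : t ∈ Δ' := by
          by_contra ht'
          refine hdiag.2.2 (hQmono _ _ (Finset.sdiff_subset_sdiff le_rfl ?_) hqmin)
          intro x hx
          exact Finset.mem_sdiff.mpr ⟨hss.subset hx, by
            simp only [Finset.mem_singleton]; rintro rfl; exact ht' hx⟩
        refine ih Δ' (by have := Finset.card_lt_card hss; omega) hdiag.1 htΔ'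
          (hQmono _ _ (Finset.sdiff_subset_sdiff le_rfl
            (Finset.sdiff_subset_sdiff hss.subset le_rfl)) hqmin) hdiag.2.2
  · rintro ⟨Δ, ⟨⟨hsub, hQD, hnq⟩, hmin⟩, htΔ⟩
    have hss : Δ \ {t} ⊂ Δ := by
      refine ⟨Finset.sdiff_subset, fun h => ?_⟩
      have := h htΔ
      simp at this
    refine ⟨ht, Δ \ {t}, (Finset.sdiff_subset).trans hsub, by simp, ?_, ?_⟩
    · by_contra hq
      exact hmin _ hss ⟨(Finset.sdiff_subset).trans hsub, hQD, hq⟩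
    · rwa [Finset.sdiff_singleton_eq_erase, Finset.insert_erase htΔ]
end

section
/- Let D = Dⁿ ∪ Dˣ be a database instance, Q a Boolean monotone query, M the associated diagnosis problem, and t ∈ Dⁿ. Then ρ(t) = 0 if and only if MCD(M, t) = ∅; otherwise ρ(t) = 1/|s| for every s ∈ MCD(M, t). -/
variable {α : Type*} [DecidableEq α]

/-- `MCD(M, t)`: the minimum-cardinality elements among the subset-minimal
diagnoses of `M` that contain `t`. -/
def MCD (Q : Finset α → Prop) (Dn Dx : Finset α) (t : α) : Set (Finset α) :=
  {Δ | MinDiag Q Dn Dx Δ ∧ t ∈ Δ ∧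
        ∀ Δ' : Finset α, MinDiag Q Dn Dx Δ' → t ∈ Δ' → Δ.card ≤ Δ'.card}

/-- `ρ(t) = 0` iff `MCD(M, t) = ∅`; otherwise `ρ(t) = 1/|s|` for
every `s ∈ MCD(M, t)`. -/
theorem rho_via_MCD
    (Q : Finset α → Prop) (hQmono : ∀ X Y : Finset α, X ⊆ Y → Q X → Q Y)
    (Dn Dx : Finset α) (hdisj : Disjoint Dn Dx) (t : α) (ht : t ∈ Dn) :
    (rho Q Dn Dx t = 0 ↔ MCD Q Dn Dx t = ∅) ∧
      ∀ s ∈ MCD Q Dn Dx t, rho Q Dn Dx t = 1 / (s.card : ℝ) := by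
  classical
  -- any minimal diagnosis containing t yields a contingency set
  have key : ∀ s : Finset α, MinDiag Q Dn Dx s → t ∈ s →
      (s.erase t) ⊆ Dn ∧ t ∉ s.erase t ∧ Q ((Dn ∪ Dx) \ s.erase t) ∧
        ¬ Q ((Dn ∪ Dx) \ insert t (s.erase t)) := by
    intro s hs hts
    have hsub : s.erase t ⊆ Dn := (Finset.erase_subset t s).trans hs.1.1
    have hnd : ¬ IsDiag Q Dn Dx (s.erase t) := hs.2 _ (Finset.erase_ssubset hts)
    have hQe : Q ((Dn ∪ Dx) \ s.erase t) := by
      by_contra h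
      exact hnd ⟨hsub, hs.1.2.1, h⟩
    refine ⟨hsub, Finset.notMem_erase t s, hQe, ?_⟩
    rw [Finset.insert_erase hts]
    exact hs.1.2.2
  by_cases hc : IsCause Q Dn Dx t
  · obtain ⟨-, Γ0, hΓ0sub, hΓ0t, hQ0, hnQ0⟩ := hc
    have hc' : IsCause Q Dn Dx t := ⟨ht, Γ0, hΓ0sub, hΓ0t, hQ0, hnQ0⟩
    set S : Set ℕ := {n : ℕ | ∃ Γ ⊆ Dn, t ∉ Γ ∧ Γ.card = n ∧
        Q ((Dn ∪ Dx) \ Γ) ∧ ¬ Q ((Dn ∪ Dx) \ insert t Γ)} with hS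
    have hSne : S.Nonempty := ⟨Γ0.card, Γ0, hΓ0sub, hΓ0t, rfl, hQ0, hnQ0⟩
    obtain ⟨Γ, hΓsub, hΓt, hΓcard, hQΓ, hnQΓ⟩ := Nat.sInf_mem hSne
    have hQD : Q (Dn ∪ Dx) := hQmono _ _ Finset.sdiff_subset hQΓ
    -- minimum-card diagnoses containing t have card = sInf S + 1
    have hlow : ∀ s : Finset α, MinDiag Q Dn Dx s → t ∈ s → sInf S + 1 ≤ s.card := by
      intro s hs hts
      obtain ⟨h1, h2, h3, h4⟩ := key s hs hts
      have : (s.erase t).card ∈ S := ⟨s.erase t, h1, h2, rfl, h3, h4⟩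
      have h5 : sInf S ≤ (s.erase t).card := Nat.sInf_le this
      have hpos : 0 < s.card := Finset.card_pos.2 ⟨t, hts⟩
      rw [Finset.card_erase_of_mem hts] at h5
      omega
    -- build a min-card diagnosis inside insert t Γ
    set T : Set ℕ := {k : ℕ | ∃ Δ, (IsDiag Q Dn Dx Δ ∧ Δ ⊆ insert t Γ) ∧ Δ.card = k} with hT
    have hdiag0 : IsDiag Q Dn Dx (insert t Γ) :=
      ⟨Finset.insert_subset ht hΓsub, hQD, hnQΓ⟩
    have hTne : T.Nonempty := ⟨(insert t Γ).card, insert t Γ, ⟨hdiag0, le_refl _⟩, rfl⟩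
    obtain ⟨Δ, ⟨hΔdiag, hΔsub⟩, hΔcard⟩ := Nat.sInf_mem hTne
    have hΔmin : MinDiag Q Dn Dx Δ := by
      refine ⟨hΔdiag, fun Δ' hss hd' => ?_⟩
      have : Δ'.card ∈ T := ⟨Δ', ⟨hd', hss.subset.trans hΔsub⟩, rfl⟩
      have := Nat.sInf_le this
      have hlt : Δ'.card < Δ.card := Finset.card_lt_card hss
      omega
    have htΔ : t ∈ Δ := by
      by_contra h
      have hΔΓ : Δ ⊆ Γ := fun x hx => by
        rcases Finset.mem_insert.1 (hΔsub hx) with h' | h'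
        · exact absurd (h' ▸ hx) h
        · exact h'
      exact hΔdiag.2.2 (hQmono _ _ (Finset.sdiff_subset_sdiff le_rfl hΔΓ) hQΓ)
    have hΔle : Δ.card ≤ sInf S + 1 := by
      calc Δ.card ≤ (insert t Γ).card := Finset.card_le_card hΔsub
        _ ≤ Γ.card + 1 := Finset.card_insert_le t Γ
        _ = sInf S + 1 := by rw [hΓcard]
    have hΔeq : Δ.card = sInf S + 1 := le_antisymm hΔle (hlow Δ hΔmin htΔ)
    have hΔMCD : Δ ∈ MCD Q Dn Dx t := by
      refine ⟨hΔmin, htΔ, fun Δ' h' ht' => ?_⟩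
      rw [hΔeq]
      exact hlow Δ' h' ht'
    have hrho : rho Q Dn Dx t = 1 / (((sInf S : ℕ) : ℝ) + 1) := by
      rw [rho, if_pos hc']
    have hne : rho Q Dn Dx t ≠ 0 := by
      rw [hrho]
      positivity
    constructor
    · constructor
      · intro h; exact absurd h hne
      · intro h; exact absurd (h ▸ hΔMCD) (Set.notMem_empty Δ)
    · intro s hs
      have h1 : s.card ≤ Δ.card := hs.2.2 Δ hΔmin htΔ
      have h2 : sInf S + 1 ≤ s.card := hlow s hs.1 hs.2.1
      have : s.card = sInf S + 1 := by omega
      rw [hrho, this]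
      push_cast
      ring_nf
  · have hrho : rho Q Dn Dx t = 0 := by rw [rho, if_neg hc]
    have hMCD : MCD Q Dn Dx t = ∅ := by
      ext s
      simp only [Set.mem_empty_iff_false, iff_false]
      intro hs
      obtain ⟨h1, h2, h3, h4⟩ := key s hs.1 hs.2.1
      exact hc ⟨ht, s.erase t, h1, h2, h3, h4⟩
    exact ⟨by simp [hrho, hMCD], fun s hs => absurd (hMCD ▸ hs) (Set.notMem_empty s)⟩
end

section
/- Let D = Dⁿ ∪ Dˣ be a database instance and Q a Boolean monotone query (the semantics of a Datalog query with answer atom ans), and let AP = ⟨Q, Dˣ, Dⁿ, ans⟩ be the associated Datalog abduction problem. Then a tuple t ∈ Dⁿ is an actual cause for ans (i.e., for Q in (Dⁿ, Dˣ)) if and only if t is relevant in AP, i.e., t belongs to some abductive solution of AP. -/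
variable {α : Type*} [DecidableEq α]

/-- An abductive solution (abductive diagnosis) of the Datalog abduction problem
`AP = ⟨Q, Dx, Dn, ans⟩`: an inclusion-minimal set `Δ` of hypotheses (endogenous
tuples) such that, together with the background data `Dx`, the program entails
the observation, i.e. `Q (Dx ∪ Δ)` holds. -/
def AbdSol (Q : Finset α → Prop) (Dx Dn Δ : Finset α) : Prop :=
  Δ ⊆ Dn ∧ Q (Dx ∪ Δ) ∧ ∀ Δ' : Finset α, Δ' ⊂ Δ → ¬ Q (Dx ∪ Δ')

lemma union_sdiff_of_subset_disj {Dn Dx Γ : Finset α} (hΓ : Γ ⊆ Dn)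
    (hdisj : Disjoint Dn Dx) : (Dn ∪ Dx) \ Γ = Dx ∪ (Dn \ Γ) := by
  ext x
  simp only [Finset.mem_sdiff, Finset.mem_union]
  constructor
  · rintro ⟨h1 | h1, h2⟩
    · exact Or.inr ⟨h1, h2⟩
    · exact Or.inl h1
  · rintro (h | ⟨h1, h2⟩)
    · exact ⟨Or.inr h, fun hx => Finset.disjoint_left.mp hdisj (hΓ hx) h⟩
    · exact ⟨Or.inl h1, h2⟩

/-- `t ∈ Dn` is an actual cause for `ans` iff `t` is relevant in `AP`,
i.e. `t` belongs to some abductive solution of `AP`. -/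
theorem cause_iff_relevant
    (Q : Finset α → Prop) (hQmono : ∀ X Y : Finset α, X ⊆ Y → Q X → Q Y)
    (Dn Dx : Finset α) (hdisj : Disjoint Dn Dx) (t : α) (ht : t ∈ Dn) :
    IsCause Q Dn Dx t ↔ ∃ Δ : Finset α, AbdSol Q Dx Dn Δ ∧ t ∈ Δ := by
  constructor
  · rintro ⟨-, Γ, hΓ, htΓ, hQ, hnQ⟩
    rw [union_sdiff_of_subset_disj hΓ hdisj] at hQ
    -- pick a minimal Δ ⊆ Dn \ Γ with Q (Dx ∪ Δ)
    obtain ⟨Δ, ⟨hΔsub, hΔQ⟩, hmin⟩ := (wellFounded_lt (α := Finset α)).has_min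
        {Δ : Finset α | Δ ⊆ Dn \ Γ ∧ Q (Dx ∪ Δ)} ⟨Dn \ Γ, le_refl _, hQ⟩
    have htΔ : t ∈ Δ := by
      by_contra htΔ
      apply hnQ
      rw [union_sdiff_of_subset_disj (by
        intro x hx
        simp only [Finset.mem_insert] at hx
        rcases hx with rfl | hx
        · exact ht
        · exact hΓ hx) hdisj]
      apply hQmono (Dx ∪ Δ) _ _ hΔQ
      apply Finset.union_subset_union_right
      intro x hx
      have := hΔsub hx
      simp only [Finset.mem_sdiff] at this ⊢
      refine ⟨this.1, ?_⟩
      simp only [Finset.mem_insert]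
      rintro (rfl | h)
      · exact htΔ hx
      · exact this.2 h
    refine ⟨Δ, ⟨hΔsub.trans (Finset.sdiff_subset), hΔQ, ?_⟩, htΔ⟩
    intro Δ' hΔ' hQ'
    exact hmin Δ' ⟨hΔ'.subset.trans hΔsub, hQ'⟩ hΔ'
  · rintro ⟨Δ, ⟨hΔsub, hΔQ, hmin⟩, htΔ⟩
    refine ⟨ht, Dn \ Δ, Finset.sdiff_subset, by simp [htΔ], ?_, ?_⟩
    · rw [union_sdiff_of_subset_disj Finset.sdiff_subset hdisj,
        Finset.sdiff_sdiff_self_left, Finset.inter_eq_right.mpr hΔsub]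
      exact hΔQ
    · intro hQ'
      have heq : (Dn ∪ Dx) \ insert t (Dn \ Δ) = Dx ∪ Δ.erase t := by
        rw [union_sdiff_of_subset_disj (by
          intro x hx
          simp only [Finset.mem_insert, Finset.mem_sdiff] at hx
          rcases hx with rfl | hx
          · exact ht
          · exact hx.1) hdisj]
        congr 1
        ext x
        simp only [Finset.mem_sdiff, Finset.mem_insert, Finset.mem_erase]
        constructor
        · rintro ⟨hxDn, hx⟩
          push_neg at hx
          exact ⟨hx.1, hx.2 hxDn⟩
        · rintro ⟨hxt, hxΔ⟩
          refine ⟨hΔsub hxΔ, ?_⟩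
          push_neg
          exact ⟨hxt, fun _ => hxΔ⟩
      rw [heq] at hQ'
      exact hmin _ (Finset.erase_ssubset htΔ) hQ'
end

section
/- Let D = Dⁿ ∪ Dˣ be a database instance and Q a Boolean monotone query (the semantics of a Datalog query with answer atom ans), and let AP = ⟨Q, Dˣ, Dⁿ, ans⟩ be the associated Datalog abduction problem. If t ∈ Dⁿ is an actual cause for ans, then there exists a necessary hypothesis set containing t, and ρ(t) = 1/|N|, where N is a necessary hypothesis set of minimum cardinality among those containing t. -/
variable {α : Type*} [DecidableEq α]

/-- A necessary hypothesis set for the Datalog abduction problem `AP = ⟨Q, Dx, Dn, ans⟩`: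
an inclusion-minimal `N ⊆ Dn` such that the abduction problem with hypotheses `Dn ∖ N`
has no solution, equivalently such that `Q (Dx ∪ (Dn ∖ N))` fails. -/
def NecSet (Q : Finset α → Prop) (Dx Dn N : Finset α) : Prop :=
  N ⊆ Dn ∧ ¬ Q (Dx ∪ (Dn \ N)) ∧ ∀ N' : Finset α, N' ⊂ N → Q (Dx ∪ (Dn \ N'))

lemma sdiff_eq_union' {Dn Dx S : Finset α} (hdisj : Disjoint Dn Dx) (hS : S ⊆ Dn) :
    (Dn ∪ Dx) \ S = Dx ∪ (Dn \ S) := by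
  ext x
  simp only [Finset.mem_sdiff, Finset.mem_union]
  constructor
  · rintro ⟨h1 | h1, h2⟩
    · exact Or.inr ⟨h1, h2⟩
    · exact Or.inl h1
  · rintro (h | ⟨h1, h2⟩)
    · exact ⟨Or.inr h, fun hx => (Finset.disjoint_left.mp hdisj (hS hx) h)⟩
    · exact ⟨Or.inl h1, h2⟩

lemma shrink (Q : Finset α → Prop) (hQmono : ∀ X Y : Finset α, X ⊆ Y → Q X → Q Y)
    (Dn Dx : Finset α) (t : α) :
    ∀ N : Finset α, N ⊆ Dn → t ∈ N → ¬ Q (Dx ∪ (Dn \ N)) → Q (Dx ∪ (Dn \ (N.erase t))) →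
    ∃ N', NecSet Q Dx Dn N' ∧ t ∈ N' ∧ N' ⊆ N := by
  intro N
  induction N using Finset.strongInduction with
  | _ N ih =>
    intro hsub htN hnQ hQΓ
    by_cases hmin : ∀ M : Finset α, M ⊂ N → Q (Dx ∪ (Dn \ M))
    · exact ⟨N, ⟨hsub, hnQ, hmin⟩, htN, Finset.Subset.refl N⟩
    · push_neg at hmin
      obtain ⟨M, hMN, hMQ⟩ := hmin
      have htM : t ∈ M := by
        by_contra htM
        apply hMQ
        apply hQmono _ _ _ hQΓ
        apply Finset.union_subset_union_right
        apply Finset.sdiff_subset_sdiff (le_refl _)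
        intro x hx
        exact Finset.mem_erase.mpr ⟨fun h => htM (h ▸ hx), hMN.subset hx⟩
      have hQM : Q (Dx ∪ (Dn \ M.erase t)) := by
        apply hQmono _ _ _ hQΓ
        apply Finset.union_subset_union_right
        apply Finset.sdiff_subset_sdiff (le_refl _)
        exact Finset.erase_subset_erase t hMN.subset
      obtain ⟨N', hN', htN', hsub'⟩ := ih M hMN (hMN.subset.trans hsub) htM hMQ hQM
      exact ⟨N', hN', htN', hsub'.trans hMN.subset⟩

/-- if `t ∈ Dn` is an actual cause for `ans`, then some necessary
hypothesis set contains `t`, and `ρ(t) = 1/|N|` for any necessary hypothesis set `N`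
of minimum cardinality among those containing `t`. -/
theorem rho_via_necessary_hypothesis_sets
    (Q : Finset α → Prop) (hQmono : ∀ X Y : Finset α, X ⊆ Y → Q X → Q Y)
    (Dn Dx : Finset α) (hdisj : Disjoint Dn Dx) (t : α) (ht : t ∈ Dn)
    (hc : IsCause Q Dn Dx t) :
    (∃ N : Finset α, NecSet Q Dx Dn N ∧ t ∈ N) ∧
      ∀ N : Finset α, NecSet Q Dx Dn N → t ∈ N →
        (∀ N' : Finset α, NecSet Q Dx Dn N' → t ∈ N' → N.card ≤ N'.card) →
        rho Q Dn Dx t = 1 / (N.card : ℝ) := by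
  obtain ⟨htDn, Γ₀, hΓ₀Dn, htΓ₀, hQ1, hQ2⟩ := hc
  have hid : ∀ S : Finset α, S ⊆ Dn → (Dn ∪ Dx) \ S = Dx ∪ (Dn \ S) :=
    fun S hS => sdiff_eq_union' hdisj hS
  -- from a contingency set, get a NecSet containing t inside insert t Γ
  have key : ∀ Γ : Finset α, Γ ⊆ Dn → t ∉ Γ → Q ((Dn ∪ Dx) \ Γ) →
      ¬ Q ((Dn ∪ Dx) \ insert t Γ) →
      ∃ N', NecSet Q Dx Dn N' ∧ t ∈ N' ∧ N' ⊆ insert t Γ := by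
    intro Γ hΓ htΓ h1 h2
    have hins : insert t Γ ⊆ Dn := Finset.insert_subset ht hΓ
    have h2' : ¬ Q (Dx ∪ (Dn \ insert t Γ)) := by rw [← hid _ hins]; exact h2
    have h1' : Q (Dx ∪ (Dn \ (insert t Γ).erase t)) := by
      rw [Finset.erase_insert htΓ, ← hid _ hΓ]; exact h1
    exact shrink Q hQmono Dn Dx t (insert t Γ) hins (Finset.mem_insert_self t Γ) h2' h1'
  obtain ⟨N0, hN0, htN0, _⟩ := key Γ₀ hΓ₀Dn htΓ₀ hQ1 hQ2
  refine ⟨⟨N0, hN0, htN0⟩, ?_⟩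
  intro N hN htN hminN
  have hcause : IsCause Q Dn Dx t := ⟨htDn, Γ₀, hΓ₀Dn, htΓ₀, hQ1, hQ2⟩
  rw [rho, if_pos hcause]
  set S : Set ℕ := {n : ℕ | ∃ Γ ⊆ Dn, t ∉ Γ ∧ Γ.card = n ∧
      Q ((Dn ∪ Dx) \ Γ) ∧ ¬ Q ((Dn ∪ Dx) \ insert t Γ)} with hS
  -- N.card - 1 ∈ S
  have hmem : N.card - 1 ∈ S := by
    refine ⟨N.erase t, (Finset.erase_subset t N).trans hN.1, Finset.notMem_erase t N,
      Finset.card_erase_of_mem htN, ?_, ?_⟩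
    · rw [hid _ ((Finset.erase_subset t N).trans hN.1)]
      exact hN.2.2 _ (Finset.erase_ssubset htN)
    · rw [Finset.insert_erase htN, hid _ hN.1]
      exact hN.2.1
  -- lower bound: every n ∈ S satisfies N.card ≤ n + 1
  have hlb : ∀ n ∈ S, N.card ≤ n + 1 := by
    intro n hn
    obtain ⟨Γ, hΓ, htΓ, hcard, h1, h2⟩ := hn
    obtain ⟨N', hN', htN', hsub'⟩ := key Γ hΓ htΓ h1 h2
    calc N.card ≤ N'.card := hminN N' hN' htN'
      _ ≤ (insert t Γ).card := Finset.card_le_card hsub'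
      _ ≤ Γ.card + 1 := Finset.card_insert_le t Γ
      _ = n + 1 := by rw [hcard]
  have h1le : 1 ≤ N.card := Finset.card_pos.mpr ⟨t, htN⟩
  have hle : sInf S ≤ N.card - 1 := Nat.sInf_le hmem
  have hge : N.card ≤ sInf S + 1 := hlb _ (Nat.sInf_mem ⟨_, hmem⟩)
  have heq : sInf S + 1 = N.card := by omega
  rw [← heq]
  push_cast
  ring_nf
end
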